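/- arXiv:2003.11541 — 7 statements merged into one kernel-verified Lean document; each statement's English description precedes it below -/
import Mathlib

section
/- For small categories A, B, C and functors t : A → C, s : A → B, the cocomma category (flow sum) B ↑_A C, obtained by freely adjoining to the disjoint union B ⊔ C a morphism s(a) → t(a) for each object a of A, modulo the relations generated by morphisms of A, fits into a lax commutative square with the inclusions B → B ↑_A C and C → B ↑_A C, and is universal among such lax squares: for any category D with functors f : B → D, g : C → D and a natural transformation f ∘ s ⟹ g ∘ t, there is a unique functor h : B ↑_A C → D commuting with the inclusions and the natural transformations. -/
open CategoryTheory
universe w v u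
variable {A B C : Type u} [SmallCategory A] [SmallCategory B] [SmallCategory C]

/-- A word `b ⟶ s(a) ⟶ t(a) ⟶ c` representing a morphism of the cocomma category. -/
structure CocommaWord (s : A ⥤ B) (t : A ⥤ C) (b : B) (c : C) : Type u where
  pt : A
  l : b ⟶ s.obj pt
  r : t.obj pt ⟶ c

/-- The relation on words generated by morphisms of `A`. -/
inductive CocommaRel (s : A ⥤ B) (t : A ⥤ C) (b : B) (c : C) :
    CocommaWord s t b c → CocommaWord s t b c → Prop
  | mk {a a' : A} (θ : a ⟶ a') (φ : b ⟶ s.obj a) (ψ : t.obj a' ⟶ c) :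
      CocommaRel s t b c ⟨a, φ, t.map θ ≫ ψ⟩ ⟨a', φ ≫ s.map θ, ψ⟩

/-- The cocomma (flow sum) category `B ↑_A C`: objects are `Ob B ⊔ Ob C`. -/
def Cocomma (s : A ⥤ B) (t : A ⥤ C) : Type u := B ⊕ C

variable (s : A ⥤ B) (t : A ⥤ C)

/-- Morphisms of the cocomma category. -/
def CocommaHom : Cocomma s t → Cocomma s t → Type u
  | .inl b, .inl b' => b ⟶ b'
  | .inl b, .inr c => Quot (CocommaRel s t b c)
  | .inr _, .inl _ => PEmpty
  | .inr c, .inr c' => c ⟶ c'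

instance : Category.{u} (Cocomma s t) where
  Hom := CocommaHom s t
  id x := match x with
    | .inl b => (𝟙 b : b ⟶ b)
    | .inr c => (𝟙 c : c ⟶ c)
  comp {x y z} F G := match x, y, z, F, G with
    | .inl _, .inl _, .inl _, F, G => (F ≫ G : _ ⟶ _)
    | .inl _b, .inl _b', .inr _c, F, G =>
        Quot.lift (fun w => Quot.mk _ ⟨w.pt, F ≫ w.l, w.r⟩)
          (by rintro _ _ ⟨θ, φ, ψ⟩; dsimp
              erw [← Category.assoc]
              exact Quot.sound (CocommaRel.mk θ (F ≫ φ) ψ)) G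
    | .inl _b, .inr _c, .inr _c', F, G =>
        Quot.lift (fun w => Quot.mk _ ⟨w.pt, w.l, w.r ≫ G⟩)
          (by rintro _ _ ⟨θ, φ, ψ⟩; dsimp
              erw [Category.assoc]
              exact Quot.sound (CocommaRel.mk θ φ (ψ ≫ G))) F
    | .inr _, .inr _, .inr _, F, G => (F ≫ G : _ ⟶ _)
    | .inr _, .inl _, _, F, _ => F.elim
    | .inl _, .inr _, .inl _, _, G => G.elim
    | .inr _, .inr _, .inl _, _, G => G.elim
  id_comp {x y} F := by
    match x, y, F with
    | .inl _, .inl _, F => exact Category.id_comp F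
    | .inl _, .inr _, F =>
        induction F using Quot.ind with
        | _ w => dsimp; rw [Category.id_comp]
    | .inr _, .inl _, F => exact F.elim
    | .inr _, .inr _, F => exact Category.id_comp F
  comp_id {x y} F := by
    match x, y, F with
    | .inl _, .inl _, F => exact Category.comp_id F
    | .inl _, .inr _, F =>
        induction F using Quot.ind with
        | _ w => dsimp; rw [Category.comp_id]
    | .inr _, .inl _, F => exact F.elim
    | .inr _, .inr _, F => exact Category.comp_id F
  assoc {x y z w} F G H := by
    match x, y, z, w, F, G, H with
    | .inl _, .inl _, .inl _, .inl _, F, G, H => exact Category.assoc F G H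
    | .inl _, .inl _, .inl _, .inr _, F, G, H =>
        induction H using Quot.ind with
        | _ w => dsimp; erw [Category.assoc]
    | .inl _, .inl _, .inr _, .inr _, F, G, H =>
        induction G using Quot.ind with
        | _ w => dsimp
    | .inl _, .inr _, .inr _, .inr _, F, G, H =>
        induction F using Quot.ind with
        | _ w => dsimp; erw [Category.assoc]
    | .inr _, .inr _, .inr _, .inr _, F, G, H => exact Category.assoc F G H
    | .inr _, .inl _, _, _, F, _, _ => exact F.elim
    | .inl _, .inr _, .inl _, _, _, G, _ => exact G.elim
    | .inr _, .inr _, .inl _, _, _, G, _ => exact G.elim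
    | _, .inl _, .inr _, .inl _, _, _, H => exact H.elim
    | _, .inr _, .inr _, .inl _, _, _, H => exact H.elim

/-- The inclusion of `B` into the cocomma category. -/
def Cocomma.inlF : B ⥤ Cocomma s t where
  obj b := Sum.inl b
  map φ := φ
  map_id _ := rfl
  map_comp _ _ := rfl

/-- The inclusion of `C` into the cocomma category. -/
def Cocomma.inrF : C ⥤ Cocomma s t where
  obj c := Sum.inr c
  map φ := φ
  map_id _ := rfl
  map_comp _ _ := rfl

/-- The canonical natural transformation of the cocomma (lax) square. -/
def Cocomma.natTrans : s ⋙ Cocomma.inlF s t ⟶ t ⋙ Cocomma.inrF s t where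
  app a := Quot.mk _ ⟨a, 𝟙 _, 𝟙 _⟩
  naturality a a' θ := by
    dsimp [Cocomma.inlF, Cocomma.inrF]
    show Quot.mk _ _ = Quot.mk _ _
    have := Quot.sound (CocommaRel.mk (s := s) (t := t) θ (𝟙 (s.obj a)) (𝟙 (t.obj a')))
    simpa using this.symm

/-! Every arrow `b ⟶ c` of the cocomma category factors as `b ⟶ s a ⟶ t a ⟶ c` through a
component of `natTrans`, so a functor out of it is determined by its restrictions to `B` and `C`
together with its values on those components. Conversely, any `f`, `g`, `η` define such a functor:
the relation on words is exactly what naturality of `η` makes `f l ≫ η a ≫ g r` respect. -/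

namespace Cocomma

variable {s t} {D : Type v} [Category.{w} D]

theorem quot_mk_eq_comp {b : B} {c : C} (w : CocommaWord s t b c) :
    (Quot.mk _ w : (inlF s t).obj b ⟶ (inrF s t).obj c) =
      (inlF s t).map w.l ≫ (natTrans s t).app w.pt ≫ (inrF s t).map w.r := by
  show _ = Quot.mk _ (⟨w.pt, w.l ≫ 𝟙 _, 𝟙 _ ≫ w.r⟩ : CocommaWord s t b c)
  simp

def lift (f : B ⥤ D) (g : C ⥤ D) (η : s ⋙ f ⟶ t ⋙ g) : Cocomma s t ⥤ D where
  obj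
    | .inl b => f.obj b
    | .inr c => g.obj c
  map {x y} F := match x, y, F with
    | .inl _, .inl _, F => f.map F
    | .inl _, .inr _, F =>
        Quot.lift (fun w => f.map w.l ≫ η.app w.pt ≫ g.map w.r)
          (by
            rintro _ _ ⟨θ, φ, ψ⟩
            simpa using (f.map φ ≫= η.naturality θ =≫ g.map ψ).symm) F
    | .inr _, .inr _, F => g.map F
    | .inr _, .inl _, F => F.elim
  map_id
    | .inl b => f.map_id b
    | .inr c => g.map_id c
  map_comp {x y z} F G := by
    match x, y, z, F, G with
    | .inl _, .inl _, .inl _, F, G => exact f.map_comp F G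
    | .inl _, .inl _, .inr _, F, G =>
        induction G using Quot.ind with
        | _ w => exact f.map_comp_assoc F w.l _
    | .inl _, .inr _, .inr _, F, G =>
        induction F using Quot.ind with
        | _ w =>
          show f.map w.l ≫ η.app w.pt ≫ g.map (w.r ≫ G) =
            (f.map w.l ≫ η.app w.pt ≫ g.map w.r) ≫ g.map G
          simpa using f.map w.l ≫= η.app w.pt ≫= g.map_comp w.r G
    | .inr _, .inr _, .inr _, F, G => exact g.map_comp F G
    | .inr _, .inl _, _, F, _ => exact F.elim
    | .inl _, .inr _, .inl _, _, G => exact G.elim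
    | .inr _, .inr _, .inl _, _, G => exact G.elim

theorem lift_map_natTrans_app (f : B ⥤ D) (g : C ⥤ D) (η : s ⋙ f ⟶ t ⋙ g) (a : A) :
    (lift f g η).map ((natTrans s t).app a) = η.app a := by
  show f.map (𝟙 _) ≫ η.app a ≫ g.map (𝟙 _) = _
  simp

theorem eq_lift (h : Cocomma s t ⥤ D) (η : s ⋙ inlF s t ⋙ h ⟶ t ⋙ inrF s t ⋙ h)
    (hη : ∀ a, h.map ((natTrans s t).app a) = η.app a) :
    h = lift (inlF s t ⋙ h) (inrF s t ⋙ h) η := by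
  refine Functor.hext (by rintro (b | c) <;> rfl) ?_
  rintro (b | c) (b' | c') F
  · rfl
  · induction F using Quot.ind with
    | _ w =>
      have key : h.map (Quot.mk _ w : (inlF s t).obj b ⟶ (inrF s t).obj c') =
          h.map ((inlF s t).map w.l) ≫ η.app w.pt ≫ h.map ((inrF s t).map w.r) := by
        rw [quot_mk_eq_comp, h.map_comp, h.map_comp, hη]
      exact heq_of_eq key
  · exact F.elim
  · rfl

end Cocomma

/-- **Universal property of the cocomma (flow sum) category.**
For any category `D`, functors `f : B ⥤ D`, `g : C ⥤ D` and a natural transformation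
`f ∘ s ⟶ g ∘ t`, there is a unique functor `h : B ↑_A C ⥤ D` commuting with the
inclusions and the natural transformations. -/
theorem cocomma_universal_property
    {A B C : Type u} [SmallCategory A] [SmallCategory B] [SmallCategory C]
    (s : A ⥤ B) (t : A ⥤ C) {D : Type v} [Category.{w} D]
    (f : B ⥤ D) (g : C ⥤ D) (η : s ⋙ f ⟶ t ⋙ g) :
    ∃! h : Cocomma s t ⥤ D,
      ∃ (h₁ : Cocomma.inlF s t ⋙ h = f) (h₂ : Cocomma.inrF s t ⋙ h = g),
        ∀ a : A, h.map ((Cocomma.natTrans s t).app a) =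
          eqToHom (Functor.congr_obj h₁ (s.obj a)) ≫ η.app a ≫
            eqToHom (Functor.congr_obj h₂ (t.obj a)).symm := by
  refine ⟨Cocomma.lift f g η, ⟨rfl, rfl, fun a => ?_⟩, ?_⟩
  · -- `inlF s t ⋙ lift f g η` and `f` agree only after unfolding `lift`, hence `erw`
    erw [eqToHom_refl, eqToHom_refl, Category.id_comp, Category.comp_id]
    exact Cocomma.lift_map_natTrans_app f g η a
  · rintro h ⟨rfl, rfl, hη⟩
    exact Cocomma.eq_lift h η fun a => by simpa using hη a
end

section
/- In a horizontally composed diagram of two adjacent commutative squares of small categories, if the right square is a comma square (flow product square) for the cospan f : B → D ← C : g, then the outer rectangle is a comma square for the cospan (B → D ← F) if and only if the left square is a fibre product square; in particular (f ↓ g) ×_C F ≅ f ↓ (g ∘ r) for any functor r : F → C. -/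
open CategoryTheory
universe u
variable {B C D F : Type u} [SmallCategory B] [SmallCategory C] [SmallCategory D] [SmallCategory F]

/-- The (strict) fibre product of two functors with common target. -/
structure CatPullback {X Y Z : Type u} [SmallCategory X] [SmallCategory Y] [SmallCategory Z]
    (p : X ⥤ Z) (q : Y ⥤ Z) : Type u where
  left : X
  right : Y
  eq : p.obj left = q.obj right

instance {X Y Z : Type u} [SmallCategory X] [SmallCategory Y] [SmallCategory Z]
    (p : X ⥤ Z) (q : Y ⥤ Z) : Category.{u} (CatPullback p q) where
  Hom x y := {φ : (x.left ⟶ y.left) × (x.right ⟶ y.right) //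
    p.map φ.1 = eqToHom x.eq ≫ q.map φ.2 ≫ eqToHom y.eq.symm}
  id x := ⟨(𝟙 _, 𝟙 _), by simp⟩
  comp φ ψ := ⟨(φ.1.1 ≫ ψ.1.1, φ.1.2 ≫ ψ.1.2), by simp [φ.2, ψ.2]⟩
  id_comp φ := by apply Subtype.ext; simp
  comp_id φ := by apply Subtype.ext; simp
  assoc φ ψ χ := by apply Subtype.ext; simp

/-- A functor is an isomorphism of categories if it admits a strict inverse. -/
def IsCatIso {X Y : Type u} [SmallCategory X] [SmallCategory Y] (e : X ⥤ Y) : Prop :=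
  ∃ e' : Y ⥤ X, e ⋙ e' = 𝟭 X ∧ e' ⋙ e = 𝟭 Y

variable (f : B ⥤ D) (g : C ⥤ D) (r : F ⥤ C)

section
variable {P : Type u} [SmallCategory P] (u : P ⥤ Comma f g) (w : P ⥤ F)
  (comm : u ⋙ Comma.snd f g = w ⋙ r)

/-- The comparison functor from the top-left corner of a left square over the comma square
to the strict fibre product `(f ↓ g) ×_C F`. -/
def toPullback : P ⥤ CatPullback (Comma.snd f g) r where
  obj p := ⟨u.obj p, w.obj p, Functor.congr_obj comm p⟩
  map φ := ⟨(u.map φ, w.map φ), by simpa using Functor.congr_hom comm φ⟩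
  map_id p := by apply Subtype.ext; dsimp; rw [u.map_id, w.map_id]; rfl
  map_comp φ ψ := by apply Subtype.ext; dsimp; rw [u.map_comp, w.map_comp]; rfl

/-- The comparison functor from the top-left corner to the comma category `f ↓ (g ∘ r)`
of the outer rectangle. -/
def toOuterComma : P ⥤ Comma f (r ⋙ g) where
  obj p := ⟨(u.obj p).left, w.obj p,
    (u.obj p).hom ≫ g.map (eqToHom (Functor.congr_obj comm p))⟩
  map {p q} φ := ⟨(u.map φ).left, w.map φ, by
    have h1 := (u.map φ).w
    have h2 := Functor.congr_hom comm φ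
    dsimp at h1 h2 ⊢
    rw [← Category.assoc, h1, Category.assoc, Category.assoc, ← Functor.map_comp,
      ← Functor.map_comp]
    congr 1
    have h2' : (u.map φ).right = _ := h2
    rw [h2']
    simp⟩
  map_id p := by apply CommaMorphism.ext <;> simp
  map_comp φ ψ := by apply CommaMorphism.ext <;> simp

end

/-!
The comparison functor of the outer rectangle factors, definitionally, as the comparison functor
of the left square followed by the canonical functor `(f ↓ g) ×_C F ⥤ f ↓ (g ∘ r)`, which
transports the structure map `f b ⟶ g c` along the equation `c = r x`. That functor is an
isomorphism of categories, with inverse `(b, x, η) ↦ ((b, r x, η), x)`, and strict isomorphisms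
cancel on the right, so one comparison functor is an isomorphism exactly when the other is.
-/

namespace CatPullback

variable {X Y Z : Type u} [SmallCategory X] [SmallCategory Y] [SmallCategory Z]
  {p : X ⥤ Z} {q : Y ⥤ Z}

@[ext]
theorem hom_ext {x y : CatPullback p q} {φ ψ : x ⟶ y} (h₁ : φ.1.1 = ψ.1.1)
    (h₂ : φ.1.2 = ψ.1.2) : φ = ψ :=
  Subtype.ext (Prod.ext h₁ h₂)

@[simp]
theorem comp_fst {x y z : CatPullback p q} (φ : x ⟶ y) (ψ : y ⟶ z) :
    (φ ≫ ψ).1.1 = φ.1.1 ≫ ψ.1.1 :=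
  rfl

@[simp]
theorem comp_snd {x y z : CatPullback p q} (φ : x ⟶ y) (ψ : y ⟶ z) :
    (φ ≫ ψ).1.2 = φ.1.2 ≫ ψ.1.2 :=
  rfl

@[simp]
theorem eqToHom_fst {x y : CatPullback p q} (h : x = y) :
    (eqToHom h).1.1 = eqToHom (congrArg left h) := by
  subst h; rfl

@[simp]
theorem eqToHom_snd {x y : CatPullback p q} (h : x = y) :
    (eqToHom h).1.2 = eqToHom (congrArg right h) := by
  subst h; rfl

end CatPullback

namespace IsCatIso

variable {X Y Z : Type u} [SmallCategory X] [SmallCategory Y] [SmallCategory Z]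

theorem comp {a : X ⥤ Y} {b : Y ⥤ Z} (ha : IsCatIso a) (hb : IsCatIso b) :
    IsCatIso (a ⋙ b) := by
  obtain ⟨a', ha₁, ha₂⟩ := ha
  obtain ⟨b', hb₁, hb₂⟩ := hb
  refine ⟨b' ⋙ a', ?_, ?_⟩
  · change a ⋙ (b ⋙ b') ⋙ a' = 𝟭 X
    rw [hb₁, Functor.id_comp, ha₁]
  · change b' ⋙ (a' ⋙ a) ⋙ b = 𝟭 Z
    rw [ha₂, Functor.id_comp, hb₂]

theorem comp_right_iff {t : X ⥤ Y} {e : Y ⥤ Z} (he : IsCatIso e) :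
    IsCatIso (t ⋙ e) ↔ IsCatIso t := by
  obtain ⟨e', he₁, he₂⟩ := he
  refine ⟨fun h => ?_, fun h => h.comp ⟨e', he₁, he₂⟩⟩
  have ht : t = (t ⋙ e) ⋙ e' := by
    rw [Functor.assoc, he₁, Functor.comp_id]
  exact ht ▸ h.comp ⟨e, he₂, he₁⟩

end IsCatIso

@[simps]
def pullbackToComma : CatPullback (Comma.snd f g) r ⥤ Comma f (r ⋙ g) where
  obj x := ⟨x.left.left, x.right, x.left.hom ≫ g.map (eqToHom x.eq)⟩
  map {x y} φ := ⟨φ.1.1.left, φ.1.2, by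
    have hright : φ.1.1.right = _ := φ.2
    simp [hright]⟩

@[simps]
def commaToPullback : Comma f (r ⋙ g) ⥤ CatPullback (Comma.snd f g) r where
  obj y := ⟨⟨y.left, r.obj y.right, y.hom⟩, y.right, rfl⟩
  map ψ := ⟨(⟨ψ.left, r.map ψ.right, ψ.w⟩, ψ.right), by simp⟩

theorem pullbackToComma_comp_commaToPullback :
    pullbackToComma f g r ⋙ commaToPullback f g r = 𝟭 _ := by
  refine CategoryTheory.Functor.ext (fun ⟨⟨b, c, η⟩, x, (hx : c = r.obj x)⟩ => ?_) fun x y φ => ?_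
  · subst hx
    simp [pullbackToComma, commaToPullback]
  · have hright : φ.1.1.right = _ := φ.2
    -- the `eqToHom`s left over by `simp` have endpoints that agree only after unfolding
    ext <;> simp [hright] <;> exact (conj_eqToHom_iff_heq' _ _ _ _).2 HEq.rfl

theorem commaToPullback_comp_pullbackToComma :
    commaToPullback f g r ⋙ pullbackToComma f g r = 𝟭 _ :=
  CategoryTheory.Functor.ext (fun _ => by simp [pullbackToComma, commaToPullback]) fun x y ψ => by
    ext <;> simp <;> exact (conj_eqToHom_iff_heq' _ _ _ _).2 HEq.rfl

theorem isCatIso_pullbackToComma : IsCatIso (pullbackToComma f g r) :=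
  ⟨commaToPullback f g r, pullbackToComma_comp_commaToPullback f g r,
    commaToPullback_comp_pullbackToComma f g r⟩

theorem toPullback_comp_pullbackToComma {P : Type u} [SmallCategory P] (u : P ⥤ Comma f g)
    (w : P ⥤ F) (comm : u ⋙ Comma.snd f g = w ⋙ r) :
    toPullback f g r u w comm ⋙ pullbackToComma f g r = toOuterComma f g r u w comm :=
  rfl

/-- **Composition of comma squares with fibre products.** Given a commutative left square
attached to the comma square of `f : B ⥤ D ← C : g`, the outer rectangle is a comma square
for the cospan `B → D ← F` if and only if the left square is a fibre product square;
in particular `(f ↓ g) ×_C F ≅ f ↓ (g ∘ r)`. -/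
theorem comma_pullback_pasting
    {P : Type u} [SmallCategory P] (u : P ⥤ Comma f g) (w : P ⥤ F)
    (comm : u ⋙ Comma.snd f g = w ⋙ r) :
    (IsCatIso (toOuterComma f g r u w comm) ↔ IsCatIso (toPullback f g r u w comm)) ∧
      ∃ e : CatPullback (Comma.snd f g) r ⥤ Comma f (r ⋙ g), IsCatIso e := by
  rw [← toPullback_comp_pullbackToComma]
  exact ⟨(isCatIso_pullbackToComma f g r).comp_right_iff,
    pullbackToComma f g r, isCatIso_pullbackToComma f g r⟩
end

section
/- Let f : B → D be a Grothendieck opfibration between small categories and d an object of D. Then the inclusion of the fibre f⁻¹(d) into the comma category f ↓ d (the flow of f to d) is a cofinal (final) functor. -/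
open CategoryTheory
universe v w u
section Opfib
variable {B D : Type u} [SmallCategory B] [SmallCategory D]

/-- An arrow `φ` of `B` is cocartesian for `f : B ⥤ D` if any other arrow out of its source
whose image factors through `f(φ)` factors uniquely through `φ`, with prescribed image. -/
def IsCocartesianArrow (f : B ⥤ D) {x y : B} (φ : x ⟶ y) : Prop :=
  ∀ ⦃z : B⦄ (φ' : x ⟶ z) (ψ : f.obj y ⟶ f.obj z), f.map φ' = f.map φ ≫ ψ →
    ∃! χ : y ⟶ z, f.map χ = ψ ∧ φ ≫ χ = φ'

/-- A functor is a Grothendieck opfibration if every arrow of the base with a given lift of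
its source admits a cocartesian lift. -/
def IsOpfibration (f : B ⥤ D) : Prop :=
  ∀ ⦃x : B⦄ ⦃d : D⦄ (ψ : f.obj x ⟶ d), ∃ (y : B) (φ : x ⟶ y) (e : f.obj y = d),
    f.map φ ≫ eqToHom e = ψ ∧ IsCocartesianArrow f φ

/-- The fibre of `f : B ⥤ D` at `d`: objects of `B` over `d` and morphisms over `𝟙 d`. -/
structure Fiber (f : B ⥤ D) (d : D) : Type u where
  obj : B
  eq : f.obj obj = d

instance (f : B ⥤ D) (d : D) : Category.{u} (Fiber f d) where
  Hom x y := {φ : x.obj ⟶ y.obj // f.map φ = eqToHom (x.eq.trans y.eq.symm)}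
  id x := ⟨𝟙 _, by simp⟩
  comp φ ψ := ⟨φ.1 ≫ ψ.1, by simp [φ.2, ψ.2]⟩
  id_comp φ := by apply Subtype.ext; simp
  comp_id φ := by apply Subtype.ext; simp
  assoc φ ψ χ := by apply Subtype.ext; simp

/-- The inclusion of the fibre `f⁻¹(d)` into the comma category `f ↓ d`. -/
def fiberInclusion (f : B ⥤ D) (d : D) : Fiber f d ⥤ CostructuredArrow f d where
  obj x := CostructuredArrow.mk (eqToHom x.eq)
  map φ := CostructuredArrow.homMk φ.1 (by simp [φ.2])

end Opfib

/-!
For an object `X = (b, η : f b ⟶ d)` of `f ↓ d`, a cocartesian lift `φ : b ⟶ y` of `η` lands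
in the fibre, and by cocartesianness every map from `X` to an object of the fibre factors through
`φ` by a map in the fibre. Hence `φ` is a weakly initial object of `X ↓ fiberInclusion f d`,
which is therefore connected.
-/

lemma CategoryTheory.isConnected_of_nonempty_hom_from {J : Type*} [Category J] (j₀ : J)
    (h : ∀ j, Nonempty (j₀ ⟶ j)) : IsConnected J :=
  have : Nonempty J := ⟨j₀⟩
  zigzag_isConnected fun j₁ j₂ => Zigzag.of_inv_hom (h j₁).some (h j₂).some

lemma IsCocartesianArrow.exists_fiberHom_comp_eq {B D : Type u} [SmallCategory B]
    [SmallCategory D] {f : B ⥤ D} {d : D} {x : B} {y z : Fiber f d} {φ : x ⟶ y.obj}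
    (hc : IsCocartesianArrow f φ) (ψ : x ⟶ z.obj)
    (h : f.map ψ ≫ eqToHom z.eq = f.map φ ≫ eqToHom y.eq) :
    ∃ χ : y ⟶ z, φ ≫ χ.1 = ψ := by
  have hfac : f.map ψ = f.map φ ≫ eqToHom (y.eq.trans z.eq.symm) :=
    (cancel_mono (eqToHom z.eq)).1 (by simpa using h)
  obtain ⟨χ, ⟨hχf, hχφ⟩, -⟩ := hc ψ _ hfac
  exact ⟨⟨χ, hχf⟩, hχφ⟩

/-- **For an opfibration `f : B ⥤ D`, the inclusion of the fibre `f⁻¹(d)` into the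
comma category `f ↓ d` is cofinal (final).** -/
theorem fiberInclusion_final {B D : Type u} [SmallCategory B] [SmallCategory D]
    (f : B ⥤ D) (hf : IsOpfibration f) (d : D) :
    (fiberInclusion f d).Final := by
  refine ⟨fun X => ?_⟩
  obtain ⟨y, φ, e, hφ, hc⟩ := hf X.hom
  let y' : Fiber f d := ⟨y, e⟩
  refine isConnected_of_nonempty_hom_from
    (StructuredArrow.mk (Y := y') (CostructuredArrow.homMk φ hφ)) fun Y => ?_
  obtain ⟨χ, hχ⟩ := hc.exists_fiberHom_comp_eq (y := y') Y.hom.left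
    ((CostructuredArrow.w Y.hom).trans hφ.symm)
  exact ⟨StructuredArrow.homMk χ (CostructuredArrow.hom_ext _ _ hχ)⟩
end

section
/- Let f : B → D and g : C → D be functors between small categories and V a bicomplete category. For the comma square with projections s : f ↓ g → B and t : f ↓ g → C and its canonical natural transformation f ∘ s ⟹ g ∘ t, the base change natural transformation t_! s^* ⟹ g^* f_! is a natural isomorphism of functors Fun(B, V) → Fun(C, V). -/
/-!
Through the pointwise formulas `(t_! F)(c) = colim_{(t ↓ c)} F` and `(f_! H)(d) = colim_{(f ↓ d)} H`,
the component at `H` and `c` of the base change map of any lax square is the comparison map of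
colimits along `CostructuredArrow.map₂ α : (t ↓ c) ⥤ (f ↓ g c)`; it is therefore invertible as soon
as these functors are final. For the comma square, `map₂` is left adjoint to
`(b, φ : f b ⟶ g c) ↦ ((b, c, φ), 𝟙 c)`, with invertible counit, and such a left adjoint is final.
-/
open CategoryTheory CategoryTheory.Limits
universe v w u

section BaseChange
variable {A B C D : Type u} [SmallCategory A] [SmallCategory B] [SmallCategory C] [SmallCategory D]
variable (V : Type v) [Category.{w} V] [HasColimitsOfSize.{u,u} V]

/-- The transformation `f^* ⋙ s^* ⟶ g^* ⋙ t^*` induced by `α : s ⋙ f ⟶ t ⋙ g`. -/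
def restrictionSquare (s : A ⥤ B) (t : A ⥤ C) (f : B ⥤ D) (g : C ⥤ D) (α : s ⋙ f ⟶ t ⋙ g) :
    ((Functor.whiskeringLeft B D V).obj f ⋙ (Functor.whiskeringLeft A B V).obj s : (D ⥤ V) ⥤ (A ⥤ V)) ⟶
      (Functor.whiskeringLeft C D V).obj g ⋙ (Functor.whiskeringLeft A C V).obj t where
  app H := Functor.whiskerRight α H
  naturality := by intros; ext; simp

/-- The base change natural transformation `t_! s^* ⟶ g^* f_!` of a lax square,
defined as the composite `t_! s^* ⟶ t_! s^* f^* f_! ⟶ t_! t^* g^* f_! ⟶ g^* f_!`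
using the unit of `f_! ⊣ f^*` and the counit of `t_! ⊣ t^*`. -/
noncomputable def baseChange (s : A ⥤ B) (t : A ⥤ C) (f : B ⥤ D) (g : C ⥤ D)
    (α : s ⋙ f ⟶ t ⋙ g) :
    ((Functor.whiskeringLeft A B V).obj s ⋙ t.lan : (B ⥤ V) ⥤ (C ⥤ V)) ⟶
      f.lan ⋙ (Functor.whiskeringLeft C D V).obj g :=
  Functor.whiskerRight (f.lanAdjunction V).unit ((Functor.whiskeringLeft A B V).obj s ⋙ t.lan) ≫
    Functor.whiskerRight (Functor.whiskerLeft f.lan (restrictionSquare V s t f g α)) t.lan ≫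
    Functor.whiskerLeft (f.lan ⋙ (Functor.whiskeringLeft C D V).obj g) (t.lanAdjunction V).counit

end BaseChange

universe v₁ v₂ v₃ u₁ u₂ u₃

namespace CategoryTheory

theorem Adjunction.final_of_isIso_counit {C D : Type*} [Category C] [Category D]
    {L : C ⥤ D} {R : D ⥤ C} (adj : L ⊣ R) [IsIso adj.counit] : L.Final := by
  have := Functor.final_of_adjunction adj
  have : (R ⋙ L).Final := Functor.final_of_natIso (asIso adj.counit).symm
  exact Functor.final_of_final_comp R L

namespace CostructuredArrow

variable {B : Type u₁} {C : Type u₂} {D : Type u₃}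
  [Category.{v₁} B] [Category.{v₂} C] [Category.{v₃} D] (f : B ⥤ D) (g : C ⥤ D) (c : C)

def toCommaSnd : CostructuredArrow f (g.obj c) ⥤ CostructuredArrow (Comma.snd f g) c where
  obj d := mk (Y := Comma.mk (L := f) (R := g) d.left c d.hom) (𝟙 c)
  map φ := homMk { left := φ.left, right := 𝟙 c } (Category.id_comp _)

lemma left_right_of_hom_toCommaSnd {e : CostructuredArrow (Comma.snd f g) c} {d}
    (ψ : e ⟶ (toCommaSnd f g c).obj d) : ψ.left.right = e.hom :=
  (Category.comp_id _).symm.trans (w ψ)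

def commaSndAdjunction :
    map₂ (Comma.natTrans f g) (𝟙 (g.obj c)) ⊣ toCommaSnd f g c :=
  Adjunction.mkOfHomEquiv
    { homEquiv e d :=
        { toFun φ := homMk
            { left := φ.left, right := e.hom, w := (w φ).trans (e.left.hom ≫= Category.comp_id _) }
            (Category.comp_id _)
          invFun ψ := homMk ψ.left.left (ψ.left.w.trans <| by
            rw [left_right_of_hom_toCommaSnd]; exact e.left.hom ≫= (Category.comp_id _).symm)
          left_inv φ := by ext; rfl
          right_inv ψ := by
            ext
            · rfl
            · exact (left_right_of_hom_toCommaSnd f g c ψ).symm }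
      homEquiv_naturality_left_symm _ _ := rfl
      homEquiv_naturality_right _ _ := by
        ext
        · rfl
        · exact (Category.comp_id _).symm }

instance : IsIso (commaSndAdjunction f g c).counit := by
  have (d : CostructuredArrow f (g.obj c)) : IsIso ((commaSndAdjunction f g c).counit.app d) :=
    have : IsIso ((proj f (g.obj c)).map ((commaSndAdjunction f g c).counit.app d)) :=
      inferInstanceAs (IsIso (𝟙 d.left))
    isIso_of_reflects_iso _ (proj f (g.obj c))
  exact NatIso.isIso_of_isIso_app _

instance final_map₂_commaNatTrans : (map₂ (Comma.natTrans f g) (𝟙 (g.obj c))).Final :=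
  (commaSndAdjunction f g c).final_of_isIso_counit

end CostructuredArrow
end CategoryTheory

section BaseChangeComponents

variable {A B C D : Type u} [SmallCategory A] [SmallCategory B] [SmallCategory C] [SmallCategory D]
  (V : Type v) [Category.{w} V] [HasColimitsOfSize.{u,u} V]
  {s : A ⥤ B} {t : A ⥤ C} {f : B ⥤ D} {g : C ⥤ D} (α : s ⋙ f ⟶ t ⋙ g)

lemma lanUnit_app_whiskerLeft_baseChange_app (H : B ⥤ V) :
    t.lanUnit.app (s ⋙ H) ≫ Functor.whiskerLeft t ((baseChange V s t f g α).app H) =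
      Functor.whiskerLeft s (f.lanUnit.app H) ≫ Functor.whiskerRight α (f.lan.obj H) := by
  have lanUnit_naturality {F₁ F₂ : A ⥤ V} (φ : F₁ ⟶ F₂) :
      t.lanUnit.app F₁ ≫ Functor.whiskerLeft t (t.lan.map φ) = φ ≫ t.lanUnit.app F₂ :=
    (t.lanUnit.naturality φ).symm
  have triangle : t.lanUnit.app ((t ⋙ g) ⋙ f.lan.obj H) ≫
      Functor.whiskerLeft t ((t.lanAdjunction V).counit.app (g ⋙ f.lan.obj H)) =
        𝟙 ((t ⋙ g) ⋙ f.lan.obj H) :=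
    t.lanUnit_app_whiskerLeft_lanAdjunction_counit_app (g ⋙ f.lan.obj H)
  change t.lanUnit.app (s ⋙ H) ≫ Functor.whiskerLeft t
      (t.lan.map (Functor.whiskerLeft s ((f.lanAdjunction V).unit.app H)) ≫
        t.lan.map (Functor.whiskerRight α (f.lan.obj H)) ≫
        (t.lanAdjunction V).counit.app (g ⋙ f.lan.obj H)) = _
  rw [Functor.lanAdjunction_unit, Functor.whiskerLeft_comp, Functor.whiskerLeft_comp,
    ← Category.assoc, lanUnit_naturality, Category.assoc, ← Category.assoc (t.lanUnit.app _),
    lanUnit_naturality, Category.assoc, triangle, Category.comp_id]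

lemma lanUnit_app_comp_map_comp_baseChange_app_app (H : B ⥤ V) {c : C}
    (e : CostructuredArrow t c) :
    (t.lanUnit.app (s ⋙ H)).app e.left ≫ (t.lan.obj (s ⋙ H)).map e.hom ≫
        ((baseChange V s t f g α).app H).app c =
      (f.lanUnit.app H).app (s.obj e.left) ≫
        (f.lan.obj H).map ((CostructuredArrow.map₂ α (𝟙 (g.obj c))).obj e).hom := by
  have naturality : (t.lan.obj (s ⋙ H)).map e.hom ≫ ((baseChange V s t f g α).app H).app c =
      ((baseChange V s t f g α).app H).app (t.obj e.left) ≫ (f.lan.obj H).map (g.map e.hom) :=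
    ((baseChange V s t f g α).app H).naturality e.hom
  have component := congr_app (lanUnit_app_whiskerLeft_baseChange_app V α H) e.left
  simp only [Functor.comp_obj, NatTrans.comp_app, Functor.whiskerLeft_app,
    Functor.whiskerRight_app] at component
  rw [naturality, reassoc_of% component, ← Functor.map_comp]
  simp

lemma isIso_baseChange_app_app_of_final (H : B ⥤ V) (c : C)
    [(CostructuredArrow.map₂ α (𝟙 (g.obj c))).Final] :
    IsIso (((baseChange V s t f g α).app H).app c) := by
  let i₁ : (t.lan.obj (s ⋙ H)).obj c ≅ colimit (CostructuredArrow.proj t c ⋙ s ⋙ H) :=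
    t.leftKanExtensionObjIsoColimit (s ⋙ H) c
  let i₂ : (f.lan.obj H).obj (g.obj c) ≅ colimit (CostructuredArrow.proj f (g.obj c) ⋙ H) :=
    f.leftKanExtensionObjIsoColimit H (g.obj c)
  let Φ := CostructuredArrow.map₂ α (𝟙 (g.obj c))
  have comparison : i₁.inv ≫ ((baseChange V s t f g α).app H).app c ≫ i₂.hom =
      colimit.pre (CostructuredArrow.proj f (g.obj c) ⋙ H) Φ :=
    colimit.hom_ext fun e =>
      (t.ι_leftKanExtensionObjIsoColimit_inv_assoc (s ⋙ H) c e _).trans <|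
      ((reassoc_of% (lanUnit_app_comp_map_comp_baseChange_app_app V α H e)) i₂.hom).trans <|
      (f.ι_leftKanExtensionObjIsoColimit_hom H (g.obj c) (Φ.obj e)).trans
      (colimit.ι_pre _ Φ e).symm
  have : ((baseChange V s t f g α).app H).app c =
      i₁.hom ≫ colimit.pre (CostructuredArrow.proj f (g.obj c) ⋙ H) Φ ≫ i₂.inv := by
    rw [← comparison]
    simp
  rw [this]
  exact IsIso.comp_isIso' (Iso.isIso_hom _)
    (IsIso.comp_isIso' (Functor.Final.colimit_pre_isIso _) (Iso.isIso_inv _))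

theorem isIso_baseChange_of_final [∀ c, (CostructuredArrow.map₂ α (𝟙 (g.obj c))).Final] :
    IsIso (baseChange V s t f g α) := by
  have (H : B ⥤ V) : IsIso ((baseChange V s t f g α).app H) :=
    have := isIso_baseChange_app_app_of_final V α H
    NatIso.isIso_of_isIso_app _
  exact NatIso.isIso_of_isIso_app _

end BaseChangeComponents

theorem baseChange_comma_isIso_general {B C D : Type u} [SmallCategory B] [SmallCategory C]
    [SmallCategory D] (f : B ⥤ D) (g : C ⥤ D)
    (V : Type v) [Category.{w} V] [HasColimitsOfSize.{u,u} V] :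
    IsIso (baseChange V (Comma.fst f g) (Comma.snd f g) f g (Comma.natTrans f g)) :=
  isIso_baseChange_of_final V (Comma.natTrans f g)

/-- **Base change along a comma (flow product) square is an isomorphism:**
for the comma square with projections `s : f ↓ g ⥤ B`, `t : f ↓ g ⥤ C`, the base change
transformation `t_! s^* ⟶ g^* f_!` is a natural isomorphism. -/
theorem baseChange_comma_isIso {B C D : Type u} [SmallCategory B] [SmallCategory C]
    [SmallCategory D] (f : B ⥤ D) (g : C ⥤ D)
    (V : Type v) [Category.{w} V] [HasColimitsOfSize.{u,u} V] [HasLimitsOfSize.{u,u} V] :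
    IsIso (baseChange V (Comma.fst f g) (Comma.snd f g) f g (Comma.natTrans f g)) :=
  baseChange_comma_isIso_general f g V
end

section
/- Let f : B → D and g : C → D be functors between small categories and V a bicomplete category. For the comma square with projections s : f ↓ g → B and t : f ↓ g → C, the dual base change natural transformation f^* g_* ⟹ s_* t^* is a natural isomorphism of functors Fun(C, V) → Fun(B, V). -/
open CategoryTheory CategoryTheory.Limits
universe v w u

section BaseChange
variable {A B C D : Type u} [SmallCategory A] [SmallCategory B] [SmallCategory C] [SmallCategory D]
variable (V : Type v) [Category.{w} V] [HasLimitsOfSize.{u,u} V]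

/-- The dual base change natural transformation `f^* g_* ⟶ s_* t^*` of a lax square,
built from the unit of `g^* ⊣ g_*` and the counit of `s^* ⊣ s_*`. -/
noncomputable def coBaseChange (s : A ⥤ B) (t : A ⥤ C) (f : B ⥤ D) (g : C ⥤ D)
    (α : s ⋙ f ⟶ t ⋙ g) :
    (Functor.ran g ⋙ (Functor.whiskeringLeft B D V).obj f : (C ⥤ V) ⥤ (B ⥤ V)) ⟶
      (Functor.whiskeringLeft A C V).obj t ⋙ Functor.ran s :=
  Functor.whiskerLeft (Functor.ran g ⋙ (Functor.whiskeringLeft B D V).obj f) (s.ranAdjunction V).unit ≫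
    Functor.whiskerRight (Functor.whiskerLeft (Functor.ran g) (restrictionSquare V s t f g α)) (Functor.ran s) ≫
    Functor.whiskerRight (g.ranAdjunction V).counit ((Functor.whiskeringLeft A C V).obj t ⋙ Functor.ran s)

end BaseChange

/-! The dual base change at `H` factors as the unit of `s^* ⊣ s_*` followed by `s_*` of the
2-cell `s^* f^* g_* H ⟶ t^* H` obtained by pasting `α` with the counit of `g^* ⊣ g_*`; hence it
is invertible exactly when `f^* g_* H`, with this 2-cell, is a right Kan extension of `t^* H`
along `s`. For the comma square this holds pointwise: at `b : B`, the category `f b ↓ g` sits in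
`b ↓ s` as a coreflective, hence initial, subcategory, and the limit of `t^* H` over it is the
limit computing `(g_* H)(f b)`. -/

namespace CategoryTheory

section LaxSquare

variable {A B C D : Type u} [SmallCategory A] [SmallCategory B] [SmallCategory C] [SmallCategory D]
variable (V : Type v) [Category.{w} V] [HasLimitsOfSize.{u,u} V]
variable {s : A ⥤ B} {t : A ⥤ C} {f : B ⥤ D} {g : C ⥤ D} (α : s ⋙ f ⟶ t ⋙ g)

noncomputable def coBaseChangeExtension (H : C ⥤ V) : s ⋙ f ⋙ g.ran.obj H ⟶ t ⋙ H :=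
  Functor.whiskerRight α (g.ran.obj H) ≫ Functor.whiskerLeft t (g.ranCounit.app H)

lemma coBaseChange_app (H : C ⥤ V) :
    (coBaseChange V s t f g α).app H =
      (s.ranAdjunction V).unit.app (f ⋙ g.ran.obj H) ≫ s.ran.map (coBaseChangeExtension V α H) := by
  dsimp [coBaseChange, restrictionSquare, coBaseChangeExtension]
  rw [Functor.ranAdjunction_counit, ← Functor.map_comp]

lemma whiskerLeft_coBaseChange_app_comp_ranCounit (H : C ⥤ V) :
    Functor.whiskerLeft s ((coBaseChange V s t f g α).app H) ≫ s.ranCounit.app (t ⋙ H) =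
      coBaseChangeExtension V α H := by
  have hnat := s.ranCounit.naturality (coBaseChangeExtension V α H)
  dsimp at hnat
  rw [coBaseChange_app, Functor.whiskerLeft_comp, Category.assoc, hnat]
  simp

theorem isIso_coBaseChange_app_iff (H : C ⥤ V) :
    IsIso ((coBaseChange V s t f g α).app H) ↔
      (f ⋙ g.ran.obj H).IsRightKanExtension (coBaseChangeExtension V α H) :=
  (Functor.isRightKanExtension_iff_isIso (F' := s.ran.obj (t ⋙ H)) _ _ _
    (whiskerLeft_coBaseChange_app_comp_ranCounit V α H)).symm

end LaxSquare

section CommaSquare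

variable {B C D : Type u} [SmallCategory B] [SmallCategory C] [SmallCategory D]
variable (f : B ⥤ D) (g : C ⥤ D) (b : B)

def StructuredArrow.toComma : StructuredArrow (f.obj b) g ⥤ Comma f g where
  obj x := ⟨b, x.right, x.hom⟩
  map u := ⟨𝟙 b, u.right, by simp⟩

def StructuredArrow.toStructuredArrowFst :
    StructuredArrow (f.obj b) g ⥤ StructuredArrow b (Comma.fst f g) :=
  (StructuredArrow.toComma f g b).toStructuredArrow b (Comma.fst f g) (fun _ => 𝟙 b)
    (fun _ => Category.comp_id _)

def StructuredArrow.ofStructuredArrowFst :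
    StructuredArrow b (Comma.fst f g) ⥤ StructuredArrow (f.obj b) g :=
  (StructuredArrow.proj b (Comma.fst f g) ⋙ Comma.snd f g).toStructuredArrow (f.obj b) g
    (fun a => f.map a.hom ≫ a.right.hom) (fun {a a'} u => by
      have hleft : a.hom ≫ u.right.left = a'.hom := StructuredArrow.w u
      show (f.map a.hom ≫ a.right.hom) ≫ g.map u.right.right = f.map a'.hom ≫ a'.right.hom
      rw [← hleft, f.map_comp, Category.assoc, Category.assoc, u.right.w])

def StructuredArrow.toStructuredArrowFstAdjunction :
    StructuredArrow.toStructuredArrowFst f g b ⊣ StructuredArrow.ofStructuredArrowFst f g b :=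
  Adjunction.mkOfHomEquiv
    { homEquiv x a :=
      { toFun m := StructuredArrow.homMk m.right.right (by
          have hleft : m.right.left = a.hom := (Category.id_comp _).symm.trans (StructuredArrow.w m)
          show x.hom ≫ g.map m.right.right = f.map a.hom ≫ a.right.hom
          rw [← hleft]
          exact m.right.w.symm)
        invFun n := StructuredArrow.homMk ⟨a.hom, n.right, (StructuredArrow.w n).symm⟩
          (Category.id_comp _)
        left_inv m := by
          ext
          · exact (StructuredArrow.w m).symm.trans (Category.id_comp _)
          · rfl
        right_inv n := by ext; rfl }
      homEquiv_naturality_left_symm _ _ := by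
        ext
        · exact (Category.id_comp _).symm
        · rfl
      homEquiv_naturality_right _ _ := by ext; rfl }

instance : (StructuredArrow.toStructuredArrowFst f g b).Initial :=
  Functor.initial_of_adjunction (StructuredArrow.toStructuredArrowFstAdjunction f g b)

variable (V : Type v) [Category.{w} V] [HasLimitsOfSize.{u,u} V]

noncomputable def Comma.isPointwiseRightKanExtensionCoBaseChangeExtension (H : C ⥤ V) :
    (Functor.RightExtension.mk _
      (coBaseChangeExtension V (Comma.natTrans f g) H)).IsPointwiseRightKanExtension := fun b =>
  Functor.Initial.isLimitWhiskerEquiv (StructuredArrow.toStructuredArrowFst f g b) _ <|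
    (g.isPointwiseRightKanExtensionRanCounit H (f.obj b)).ofIsoLimit <|
      Cone.ext (Iso.refl _) fun x => by
        change (g.ran.obj H).map x.hom ≫ (g.ranCounit.app H).app x.right =
          𝟙 _ ≫ (g.ran.obj H).map (f.map (𝟙 b)) ≫ ((g.ran.obj H).map x.hom ≫
            (g.ranCounit.app H).app x.right)
        simp

end CommaSquare

end CategoryTheory

theorem coBaseChange_comma_isIso_general {B C D : Type u} [SmallCategory B] [SmallCategory C]
    [SmallCategory D] (f : B ⥤ D) (g : C ⥤ D)
    (V : Type v) [Category.{w} V] [HasLimitsOfSize.{u,u} V] :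
    IsIso (coBaseChange V (Comma.fst f g) (Comma.snd f g) f g (Comma.natTrans f g)) := by
  have (H : C ⥤ V) : IsIso ((coBaseChange V _ _ f g (Comma.natTrans f g)).app H) :=
    (isIso_coBaseChange_app_iff V _ H).2
      (Comma.isPointwiseRightKanExtensionCoBaseChangeExtension f g V H).isRightKanExtension
  exact NatIso.isIso_of_isIso_app _

/-- **Dual base change along a comma (flow product) square is an isomorphism:**
for the comma square with projections `s : f ↓ g ⥤ B`, `t : f ↓ g ⥤ C`, the dual base change
transformation `f^* g_* ⟶ s_* t^*` is a natural isomorphism. -/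
theorem coBaseChange_comma_isIso {B C D : Type u} [SmallCategory B] [SmallCategory C]
    [SmallCategory D] (f : B ⥤ D) (g : C ⥤ D)
    (V : Type v) [Category.{w} V] [HasLimitsOfSize.{u,u} V] [HasColimitsOfSize.{u,u} V] :
    IsIso (coBaseChange V (Comma.fst f g) (Comma.snd f g) f g (Comma.natTrans f g)) :=
  coBaseChange_comma_isIso_general f g V
end

section
/- Let s : A → B and t : A → C be functors of small categories and let D = B ↑_A C be the flow sum (cocomma category) with inclusions f : B → D and g : C → D. Then for every object c of C, the induced functor from the comma category t ↓ c to the comma category f ↓ g(c), sending (a, φ : t(a) → c) to (s(a), composite f(s(a)) → g(t(a)) → g(c)), is cofinal (final). -/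
open CategoryTheory
universe w v u
variable {A B C : Type u} [SmallCategory A] [SmallCategory B] [SmallCategory C]

variable (s : A ⥤ B) (t : A ⥤ C)

/-- The canonical functor `t ↓ c ⥤ f ↓ g(c)` induced by `s`, where `f, g` are the
inclusions of `B` and `C` into the cocomma category. -/
def cocommaCostructuredMap (c : C) :
    CostructuredArrow t c ⥤ CostructuredArrow (Cocomma.inlF s t) ((Cocomma.inrF s t).obj c) where
  obj x := CostructuredArrow.mk
    (Quot.mk _ ⟨x.left, 𝟙 _, x.hom⟩ :
      (Cocomma.inlF s t).obj (s.obj x.left) ⟶ (Cocomma.inrF s t).obj c)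
  map {x y} θ := CostructuredArrow.homMk (s.map θ.left) (by
    show Quot.mk (CocommaRel s t (s.obj x.left) c)
        ⟨y.left, s.map θ.left ≫ 𝟙 (s.obj y.left), y.hom⟩ =
      Quot.mk (CocommaRel s t (s.obj x.left) c) ⟨x.left, 𝟙 (s.obj x.left), x.hom⟩
    have h1 : (⟨y.left, s.map θ.left ≫ 𝟙 _, y.hom⟩ : CocommaWord s t (s.obj x.left) c)
        = ⟨y.left, 𝟙 _ ≫ s.map θ.left, y.hom⟩ := by simp
    have h2 := Quot.sound (CocommaRel.mk (s := s) (t := t) θ.left (𝟙 (s.obj x.left)) y.hom)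
    have h3 : (⟨x.left, 𝟙 _, t.map θ.left ≫ y.hom⟩ : CocommaWord s t (s.obj x.left) c)
        = ⟨x.left, 𝟙 _, x.hom⟩ := by rw [CostructuredArrow.w θ]
    rw [h1, ← h3]
    exact h2.symm)

/-!
Let `F : t ↓ c ⥤ f ↓ g(c)` and `d = (b, δ)`. An object of `d ↓ F` is `a : A` with
`ψ : t(a) ⟶ c` and `φ : b ⟶ s(a)` such that `[φ, ψ] = δ`: precisely a word representing `δ`.
A morphism `θ : a ⟶ a'` between two such objects is precisely an instance of the generating
relation `CocommaRel`. Since the words representing `δ` form a single class of the equivalence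
relation generated by `CocommaRel`, `d ↓ F` is nonempty and connected.
-/

namespace Cocomma

variable {s t} {b : B} {c : C}

def wordHom (w : CocommaWord s t b c) : (inlF s t).obj b ⟶ (inrF s t).obj c :=
  Quot.mk _ w

theorem wordHom_surjective : Function.Surjective (wordHom (s := s) (t := t) (b := b) (c := c)) :=
  Quot.mk_surjective

theorem eqvGen_of_wordHom_eq {w w' : CocommaWord s t b c} (h : wordHom w = wordHom w') :
    Relation.EqvGen (CocommaRel s t b c) w w' :=
  Quot.eqvGen_exact h

theorem inlF_map_comp_cocommaCostructuredMap_obj_hom (x : CostructuredArrow t c)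
    (φ : b ⟶ s.obj x.left) :
    (inlF s t).map φ ≫ ((cocommaCostructuredMap s t c).obj x).hom =
      wordHom ⟨x.left, φ, x.hom⟩ := by
  change wordHom ⟨x.left, φ ≫ 𝟙 _, x.hom⟩ = _
  rw [Category.comp_id]

variable (d : CostructuredArrow (inlF s t) ((inrF s t).obj c))

def structuredArrowOfWord (w : CocommaWord s t d.left c) (h : wordHom w = d.hom) :
    StructuredArrow d (cocommaCostructuredMap s t c) :=
  StructuredArrow.mk (Y := CostructuredArrow.mk w.r)
    (CostructuredArrow.homMk w.l
      ((inlF_map_comp_cocommaCostructuredMap_obj_hom (CostructuredArrow.mk w.r) w.l).trans h))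

variable {d}

def wordOfStructuredArrow (X : StructuredArrow d (cocommaCostructuredMap s t c)) :
    CocommaWord s t d.left c :=
  ⟨X.right.left, X.hom.left, X.right.hom⟩

theorem wordHom_wordOfStructuredArrow (X : StructuredArrow d (cocommaCostructuredMap s t c)) :
    wordHom (wordOfStructuredArrow X) = d.hom :=
  (inlF_map_comp_cocommaCostructuredMap_obj_hom X.right X.hom.left).symm.trans
    (CostructuredArrow.w X.hom)

theorem structuredArrowOfWord_wordOfStructuredArrow
    (X : StructuredArrow d (cocommaCostructuredMap s t c)) :
    structuredArrowOfWord d (wordOfStructuredArrow X) (wordHom_wordOfStructuredArrow X) = X :=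
  rfl

theorem nonempty_structuredArrowOfWord_hom_of_rel {w w' : CocommaWord s t d.left c}
    (r : CocommaRel s t d.left c w w') (h : wordHom w = d.hom) (h' : wordHom w' = d.hom) :
    Nonempty (structuredArrowOfWord d w h ⟶ structuredArrowOfWord d w' h') := by
  obtain ⟨θ, φ, ψ⟩ := r
  exact ⟨StructuredArrow.homMk (CostructuredArrow.homMk θ rfl) rfl⟩

theorem zigzag_structuredArrowOfWord {w w' : CocommaWord s t d.left c}
    (e : Relation.EqvGen (CocommaRel s t d.left c) w w')
    (h : wordHom w = d.hom) (h' : wordHom w' = d.hom) :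
    Zigzag (structuredArrowOfWord d w h) (structuredArrowOfWord d w' h') := by
  induction e with
  | rel _ _ r =>
    obtain ⟨f⟩ := nonempty_structuredArrowOfWord_hom_of_rel r h h'
    exact Zigzag.of_hom f
  | refl => exact Zigzag.refl _
  | symm _ _ _ ih => exact (ih h' h).symm
  | trans _ y _ e _ ih ih' =>
    have hy : wordHom y = d.hom := (Quot.eqvGen_sound e).symm.trans h
    exact (ih h hy).trans (ih' hy h')

end Cocomma

/-- **Cofinality of the induced functor `t ↓ c ⥤ f ↓ g(c)` for a cocomma square:** for every
object `c` of `C`, the functor sending `(a, φ : t(a) → c)` to `(s(a), f(s(a)) → g(t(a)) → g(c))`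
is cofinal (final). -/
theorem cocommaCostructuredMap_final (c : C) : (cocommaCostructuredMap s t c).Final := by
  open Cocomma in
  refine ⟨fun d => ?_⟩
  obtain ⟨w, hw⟩ := wordHom_surjective d.hom
  have : Nonempty (StructuredArrow d (cocommaCostructuredMap s t c)) :=
    ⟨structuredArrowOfWord d w hw⟩
  refine zigzag_isConnected fun X Y => ?_
  rw [← structuredArrowOfWord_wordOfStructuredArrow X,
    ← structuredArrowOfWord_wordOfStructuredArrow Y]
  exact zigzag_structuredArrowOfWord (eqvGen_of_wordHom_eq
    ((wordHom_wordOfStructuredArrow X).trans (wordHom_wordOfStructuredArrow Y).symm)) _ _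
end

section
/- Small categories form a (non-unital) pseudo-category with morphisms the spans A ← B → C and composition of A ← B → C with C ← D → E given by A ← B ↓_C D → E using the comma category; this composition is associative up to canonical isomorphism. Moreover, for a fixed bicomplete category V, the assignment sending a category A to Fun(A, V) and a span (f : B → A, g : B → C) to the functor g_! f^* : Fun(A, V) → Fun(C, V) is functorial: composition of spans is sent, up to the canonical base change isomorphism, to composition of pull-push functors. -/
/-!
Both iterated commas have as objects triples `(s₁, s₂, s₃)` with arrows `g₁ s₁ ⟶ f₂ s₂` and
`g₂ s₂ ⟶ f₃ s₃`, so span composition is associative up to a strict isomorphism that merely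
re-brackets. For functoriality of pull-push, the comma square of `g₁` and `f₂` is Guitart
exact: a factorisation of `g : g₁ a ⟶ f₂ b` through an object of the comma category is
connected by a zig-zag to the tautological one through `(a, b, g)`. Guitart exact squares
satisfy the Beck–Chevalley condition for left Kan extensions, and `(snd ⋙ g₂)_! ≅ g₂_! snd_!`
by uniqueness of left adjoints.
-/
open CategoryTheory CategoryTheory.Limits
universe v w u

namespace CategoryTheory.Comma

section Assoc

variable {T₁ T₂ T₃ B₁ B₂ : Type*} [Category T₁] [Category T₂] [Category T₃] [Category B₁]
  [Category B₂] (F₁ : T₁ ⥤ B₁) (G₁ : T₂ ⥤ B₁) (F₂ : T₂ ⥤ B₂) (G₂ : T₃ ⥤ B₂)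

def assoc : Comma (snd F₁ G₁ ⋙ F₂) G₂ ⥤ Comma F₁ (fst F₂ G₂ ⋙ G₁) where
  obj X :=
    { left := X.left.left
      right := { left := X.left.right, right := X.right, hom := X.hom }
      hom := X.left.hom }
  map φ :=
    { left := φ.left.left
      right := { left := φ.left.right, right := φ.right, w := φ.w }
      w := φ.left.w }

def assocInv : Comma F₁ (fst F₂ G₂ ⋙ G₁) ⥤ Comma (snd F₁ G₁ ⋙ F₂) G₂ where
  obj X :=
    { left := { left := X.left, right := X.right.left, hom := X.hom }
      right := X.right.right
      hom := X.right.hom }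
  map φ :=
    { left := { left := φ.left, right := φ.right.left, w := φ.w }
      right := φ.right.right
      w := φ.right.w }

end Assoc

theorem isCatIso_assoc {T₁ T₂ T₃ B₁ B₂ : Type u} [SmallCategory T₁] [SmallCategory T₂]
    [SmallCategory T₃] [SmallCategory B₁] [SmallCategory B₂]
    (F₁ : T₁ ⥤ B₁) (G₁ : T₂ ⥤ B₁) (F₂ : T₂ ⥤ B₂) (G₂ : T₃ ⥤ B₂) :
    IsCatIso (assoc F₁ G₁ F₂ G₂) :=
  ⟨assocInv F₁ G₁ F₂ G₂, rfl, rfl⟩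

variable {A B C : Type*} [Category A] [Category B] [Category C] (L : A ⥤ C) (R : B ⥤ C)

abbrev twoSquare : TwoSquare (fst L R) (snd L R) L R := .mk _ _ _ _ (natTrans L R)

-- The `erw`s are needed because identities on `(snd L R).obj X` only match `X.right` after
-- unfolding `snd`.
instance guitartExact_twoSquare : (twoSquare L R).GuitartExact := by
  refine ⟨fun {a b} g => ?_⟩
  let taut : (twoSquare L R).StructuredArrowRightwards g :=
    .mk _ g (Comma.mk a b g) (𝟙 a) (𝟙 b) (by
      simp only [Functor.map_id, Functor.comp_obj, natTrans_app, Category.id_comp]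
      erw [R.map_id]
      exact Category.comp_id g)
  have zigzag_taut (x : (twoSquare L R).StructuredArrowRightwards g) : Zigzag x taut := by
    obtain ⟨X, u, v, comm, rfl⟩ := TwoSquare.StructuredArrowRightwards.mk_surjective x
    let mid : (twoSquare L R).StructuredArrowRightwards g :=
      .mk _ g (Comma.mk a X.right (L.map u ≫ X.hom)) (𝟙 a) v (by simpa using comm)
    let toX : mid ⟶ .mk _ g X u v comm :=
      StructuredArrow.homMk
        (CostructuredArrow.homMk
          ⟨u, 𝟙 X.right, by erw [R.map_id]; exact (Category.comp_id _).symm⟩ (Category.id_comp v))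
        (by ext; exact Category.id_comp u)
    let toTaut : mid ⟶ taut :=
      StructuredArrow.homMk
        (CostructuredArrow.homMk
          ⟨𝟙 a, v, by
            erw [L.map_id, Category.id_comp]
            exact comm.symm.trans (Category.assoc _ _ _).symm⟩
          (Category.comp_id v))
        (by ext; exact Category.id_comp _)
    exact (Zigzag.of_inv toX).trans (Zigzag.of_hom toTaut)
  have : Nonempty ((twoSquare L R).StructuredArrowRightwards g) := ⟨taut⟩
  exact zigzag_isConnected fun x y => (zigzag_taut x).trans (zigzag_taut y).symm

end CategoryTheory.Comma

section PullPush

variable {A B C D : Type u} [SmallCategory A] [SmallCategory B] [SmallCategory C]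
  [SmallCategory D] (V : Type v) [Category.{w} V] [HasColimitsOfSize.{u,u} V]

theorem baseChange_eq_lanBaseChange (s : A ⥤ B) (t : A ⥤ C) (f : B ⥤ D) (g : C ⥤ D)
    (α : s ⋙ f ⟶ t ⋙ g) :
    baseChange V s t f g α = TwoSquare.lanBaseChange (TwoSquare.mk s t f g α) := by
  ext F : 2
  rw [TwoSquare.lanBaseChange_app]
  erw [Adjunction.homEquiv_counit]
  simp only [baseChange, restrictionSquare, Functor.lanAdjunction_unit, NatTrans.comp_app,
    Functor.whiskerRight_app, Functor.whiskerLeft_app, Functor.comp_map,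
    Functor.whiskeringLeft_obj_map, Functor.LeftExtension.mk_hom]
  rw [← Functor.map_comp_assoc]
  congr 2
  cat_disch

theorem isIso_baseChange_of_guitartExact (s : A ⥤ B) (t : A ⥤ C) (f : B ⥤ D) (g : C ⥤ D)
    (α : s ⋙ f ⟶ t ⋙ g) [(TwoSquare.mk s t f g α).GuitartExact] :
    IsIso (baseChange V s t f g α) := by
  rw [baseChange_eq_lanBaseChange]
  infer_instance

noncomputable def lanCompIso (f : A ⥤ B) (g : B ⥤ C) :
    ((f ⋙ g).lan : (A ⥤ V) ⥤ (C ⥤ V)) ≅ f.lan ⋙ g.lan :=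
  ((f ⋙ g).lanAdjunction V).leftAdjointUniq ((f.lanAdjunction V).comp (g.lanAdjunction V))

noncomputable abbrev pullPush (f : B ⥤ A) (g : B ⥤ C) : (A ⥤ V) ⥤ (C ⥤ V) :=
  (Functor.whiskeringLeft B A V).obj f ⋙ g.lan

noncomputable def pullPushCompIso {E S₁ S₂ : Type u} [SmallCategory E] [SmallCategory S₁]
    [SmallCategory S₂] (f₁ : S₁ ⥤ A) (g₁ : S₁ ⥤ C) (f₂ : S₂ ⥤ C) (g₂ : S₂ ⥤ E) :
    pullPush V (Comma.fst g₁ f₂ ⋙ f₁) (Comma.snd g₁ f₂ ⋙ g₂) ≅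
      pullPush V f₁ g₁ ⋙ pullPush V f₂ g₂ :=
  haveI := isIso_baseChange_of_guitartExact V _ _ _ _ (Comma.natTrans g₁ f₂)
  Functor.isoWhiskerLeft ((Functor.whiskeringLeft _ A V).obj (Comma.fst g₁ f₂ ⋙ f₁))
      (lanCompIso V (Comma.snd g₁ f₂) g₂) ≪≫
    Functor.isoWhiskerLeft ((Functor.whiskeringLeft S₁ A V).obj f₁)
      (Functor.isoWhiskerRight
        (asIso (baseChange V (Comma.fst g₁ f₂) (Comma.snd g₁ f₂) g₁ f₂ (Comma.natTrans g₁ f₂)))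
        g₂.lan)

end PullPush

theorem span_composition_assoc_and_pullPush_functorial_general
    {A C E : Type u} [SmallCategory A] [SmallCategory C] [SmallCategory E]
    {S1 S2 S3 : Type u} [SmallCategory S1] [SmallCategory S2] [SmallCategory S3]
    (f1 : S1 ⥤ A) (g1 : S1 ⥤ C) (f2 : S2 ⥤ C) (g2 : S2 ⥤ E) (f3 : S3 ⥤ E)
    (V : Type v) [Category.{w} V] [HasColimitsOfSize.{u,u} V] :
    -- associativity of span composition up to canonical isomorphism of categories
    (∃ e : Comma (Comma.snd g1 f2 ⋙ g2) f3 ⥤ Comma g1 (Comma.fst g2 f3 ⋙ f2), IsCatIso e) ∧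
    -- the comma square is Guitart exact: its base change transformation is invertible
    IsIso (baseChange V (Comma.fst g1 f2) (Comma.snd g1 f2) g1 f2 (Comma.natTrans g1 f2)) ∧
    -- hence pull-push along the composite span is the composite of the pull-pushes
    Nonempty
      (((Functor.whiskeringLeft (Comma g1 f2) A V).obj (Comma.fst g1 f2 ⋙ f1) ⋙
          (Comma.snd g1 f2 ⋙ g2).lan : (A ⥤ V) ⥤ (E ⥤ V)) ≅
        (Functor.whiskeringLeft S1 A V).obj f1 ⋙ g1.lan ⋙
          (Functor.whiskeringLeft S2 C V).obj f2 ⋙ g2.lan) :=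
  ⟨⟨_, Comma.isCatIso_assoc g1 f2 g2 f3⟩,
    isIso_baseChange_of_guitartExact V _ _ _ _ _,
    ⟨pullPushCompIso V f1 g1 f2 g2⟩⟩

/-- **Spans of small categories form a non-unital pseudo-category, and pull-push is
functorial.**  Composition of spans by the comma construction is associative up to canonical
isomorphism of categories, and for a bicomplete `V` the pull-push `g_! f^*` of the comma
composite of two spans is naturally isomorphic to the composite of the two pull-pushes, via
the base change isomorphism of the comma square. -/
theorem span_composition_assoc_and_pullPush_functorial
    {A C E G : Type u} [SmallCategory A] [SmallCategory C] [SmallCategory E] [SmallCategory G]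
    {S1 S2 S3 : Type u} [SmallCategory S1] [SmallCategory S2] [SmallCategory S3]
    (f1 : S1 ⥤ A) (g1 : S1 ⥤ C) (f2 : S2 ⥤ C) (g2 : S2 ⥤ E) (f3 : S3 ⥤ E) (g3 : S3 ⥤ G)
    (V : Type v) [Category.{w} V] [HasColimitsOfSize.{u,u} V] [HasLimitsOfSize.{u,u} V] :
    -- associativity of span composition up to canonical isomorphism of categories
    (∃ e : Comma (Comma.snd g1 f2 ⋙ g2) f3 ⥤ Comma g1 (Comma.fst g2 f3 ⋙ f2), IsCatIso e) ∧
    -- the comma square is Guitart exact: its base change transformation is invertible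
    IsIso (baseChange V (Comma.fst g1 f2) (Comma.snd g1 f2) g1 f2 (Comma.natTrans g1 f2)) ∧
    -- hence pull-push along the composite span is the composite of the pull-pushes
    Nonempty
      (((Functor.whiskeringLeft (Comma g1 f2) A V).obj (Comma.fst g1 f2 ⋙ f1) ⋙
          (Comma.snd g1 f2 ⋙ g2).lan : (A ⥤ V) ⥤ (E ⥤ V)) ≅
        (Functor.whiskeringLeft S1 A V).obj f1 ⋙ g1.lan ⋙
          (Functor.whiskeringLeft S2 C V).obj f2 ⋙ g2.lan) :=
  span_composition_assoc_and_pullPush_functorial_general f1 g1 f2 g2 f3 V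
end
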